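/- With the same Hamiltonian system, define H₄ = −∑_j c_j ω_j² (−ω_j ψ₁ⱼ + τ_j). Then d/dt H₃(z(t)) = H₄(z(t)), and d/dt H₄(z(t)) = ∑_j c_j ω_j³ (ω_j ψ₂ⱼ + 2 s_j) − u(t) ∑_j c_j² ω_j². In particular, the control u first appears with nonzero coefficient in the fourth derivative of H₁ (provided ∑ c_j² ω_j² > 0). -/

import Mathlib

/-!
Each summand of `H₃` and `H₄` is a linear combination of the coordinates of one mode, so the
system gives its derivative directly: in `H₄` the two `s_j` contributions (from `ψ₁ⱼ'` and
`τ_j'`) add up to `2 s_j`, and `u` enters only through `τ_j'`, with weight `c_j · c_j ω_j²`.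
The series are differentiated term by term, which is legitimate because near each time the
differentiated summands are dominated by a summable sequence independent of time.
-/

open Metric

section LocallySummablyBounded

variable {ι : Type*}

def IsLocallySummablyBounded (B : ι → ℝ → ℝ) : Prop :=
  ∀ K : ℝ, 0 < K → ∃ g : ι → ℝ, Summable g ∧ ∀ j, ∀ t : ℝ, |t| ≤ K → B j t ≤ g j

theorem IsLocallySummablyBounded.mono {B B' : ι → ℝ → ℝ} (hB : IsLocallySummablyBounded B)
    (hle : ∀ j t, B' j t ≤ B j t) : IsLocallySummablyBounded B' := fun K hK =>
  let ⟨g, hg, hBg⟩ := hB K hK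
  ⟨g, hg, fun j t ht => (hle j t).trans (hBg j t ht)⟩

theorem IsLocallySummablyBounded.summable {B : ι → ℝ → ℝ} (hB : IsLocallySummablyBounded B)
    (hB₀ : ∀ j t, 0 ≤ B j t) (t : ℝ) : Summable fun j => B j t := by
  obtain ⟨g, hg, hBg⟩ := hB (|t| + 1) (by positivity)
  exact hg.of_nonneg_of_le (fun j => hB₀ j t) fun j => hBg j t (by linarith)

theorem IsLocallySummablyBounded.summable_of_norm {F : Type*} [NormedAddCommGroup F]
    [CompleteSpace F] {f : ι → ℝ → F} (hf : IsLocallySummablyBounded fun j t => ‖f j t‖)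
    (t : ℝ) : Summable fun j => f j t :=
  .of_norm (hf.summable (fun _ _ => norm_nonneg _) t)

theorem hasDerivAt_tsum_of_isLocallySummablyBounded {F : Type*} [NormedAddCommGroup F]
    [NormedSpace ℝ F] [CompleteSpace F] {f f' : ι → ℝ → F}
    (hf : ∀ j t, HasDerivAt (f j) (f' j t) t)
    (hf' : IsLocallySummablyBounded fun j t => ‖f' j t‖) {t : ℝ}
    (hsum : Summable fun j => f j t) :
    HasDerivAt (fun r => ∑' j, f j r) (∑' j, f' j t) t := by
  obtain ⟨g, hg, hf'g⟩ := hf' (|t| + 1) (by positivity)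
  have hball : ∀ y ∈ ball t 1, |y| ≤ |t| + 1 := fun y hy => by
    have := abs_sub_abs_le_abs_sub y t
    rw [mem_ball, Real.dist_eq] at hy
    linarith
  exact hasDerivAt_tsum_of_isPreconnected hg isOpen_ball (convex_ball t 1).isPreconnected
    (fun j y _ => hf j y) (fun j y hy => hf'g j y (hball y hy)) (mem_ball_self one_pos) hsum
    (mem_ball_self one_pos)

end LocallySummablyBounded

theorem abs_mul_mul_add_le (c w x a y b : ℝ) (hw : 0 ≤ w) :
    |c * w * (x * a + y * b)| ≤ |c| * w * (|x| * |a| + |y| * |b|) := by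
  rw [abs_mul, abs_mul, abs_of_nonneg hw, ← abs_mul, ← abs_mul]
  gcongr
  exact abs_add_le _ _

theorem tsum_neg_add_mul_right {ι : Type*} {A B : ι → ℝ} (hA : Summable A) (hB : Summable B)
    (u : ℝ) : ∑' j, (-A j + B j * u) = -(∑' j, A j - u * ∑' j, B j) := by
  rw [hA.neg.tsum_add (hB.mul_right u), tsum_neg, tsum_mul_right]
  ring

theorem norm_H₃_deriv_term_le (c ω a b : ℝ) (hω : 0 ≤ ω) :
    ‖c * ω ^ 2 * (-ω * a + b)‖ ≤ |c| * ω ^ 2 * (ω * |a| + |b|) := by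
  simpa [abs_of_nonneg hω] using abs_mul_mul_add_le c _ (-ω) a 1 b (sq_nonneg ω)

theorem norm_H₄_deriv_drift_le (c ω a b : ℝ) (hω : 0 ≤ ω) :
    ‖c * ω ^ 3 * (ω * a + 2 * b)‖ ≤ |c| * ω ^ 3 * (ω * |a| + 2 * |b|) := by
  simpa [abs_of_nonneg hω] using abs_mul_mul_add_le c _ ω a 2 b (pow_nonneg hω 3)

theorem norm_H₄_deriv_term_le (c ω a b u : ℝ) (hω : 0 ≤ ω) (hu : |u| ≤ 1) :
    ‖-(c * ω ^ 3 * (ω * a + 2 * b)) + c ^ 2 * ω ^ 2 * u‖ ≤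
      |c| * ω ^ 3 * (ω * |a| + 2 * |b|) + c ^ 2 * ω ^ 2 := by
  have hu' : c ^ 2 * ω ^ 2 * |u| ≤ c ^ 2 * ω ^ 2 := mul_le_of_le_one_right (by positivity) hu
  grw [norm_add_le, norm_neg, norm_H₄_deriv_drift_le c ω a b hω, norm_mul,
    Real.norm_of_nonneg (by positivity), Real.norm_eq_abs, hu']

section HamiltonianSystem

variable {ω c : ℕ → ℝ} {ψ₁ ψ₂ s τ : ℕ → ℝ → ℝ} {u : ℝ → ℝ}

theorem hasDerivAt_H₃_term (hψ₂ : ∀ j t, HasDerivAt (ψ₂ j) (-(ω j) * ψ₁ j t) t)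
    (hs : ∀ j t, HasDerivAt (s j) (ω j * τ j t) t) (j : ℕ) (t : ℝ) :
    HasDerivAt (fun r => c j * ω j * (ω j * ψ₂ j r + s j r))
      (c j * ω j ^ 2 * (-(ω j) * ψ₁ j t + τ j t)) t :=
  ((((hψ₂ j t).const_mul (ω j)).add (hs j t)).const_mul (c j * ω j)).congr_deriv (by ring)

theorem hasDerivAt_H₄_term (hψ₁ : ∀ j t, HasDerivAt (ψ₁ j) (ω j * ψ₂ j t + s j t) t)
    (hτ : ∀ j t, HasDerivAt (τ j) (-(ω j) * s j t + c j * u t) t) (j : ℕ) (t : ℝ) :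
    HasDerivAt (fun r => c j * ω j ^ 2 * (-(ω j) * ψ₁ j r + τ j r))
      (-(c j * ω j ^ 3 * (ω j * ψ₂ j t + 2 * s j t)) + c j ^ 2 * ω j ^ 2 * u t) t :=
  ((((hψ₁ j t).const_mul (-(ω j))).add (hτ j t)).const_mul (c j * ω j ^ 2)).congr_deriv
    (by ring)

end HamiltonianSystem

/-- For the same Hamiltonian system, with
`H₃ = −∑ c_j ω_j (ω_j ψ₂ⱼ + s_j)` and `H₄ = −∑ c_j ω_j² (−ω_j ψ₁ⱼ + τ_j)`, assuming
locally uniform absolute convergence of the differentiated series, one has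
`d/dt H₃(z(t)) = H₄(z(t))` and
`d/dt H₄(z(t)) = ∑ c_j ω_j³ (ω_j ψ₂ⱼ + 2 s_j) − u(t) ∑ c_j² ω_j²`:
the control `u` first appears (with coefficient `−∑ c_j² ω_j² ≠ 0` when
`∑ c_j² ω_j² > 0`) in the fourth derivative of `H₁`. -/
theorem stmt_9 (ω c : ℕ → ℝ) (hω : ∀ j, 0 < ω j)
    (ψ₁ ψ₂ s τ : ℕ → ℝ → ℝ) (u : ℝ → ℝ)
    (hψ₁ : ∀ j t, HasDerivAt (ψ₁ j) (ω j * ψ₂ j t + s j t) t)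
    (hψ₂ : ∀ j t, HasDerivAt (ψ₂ j) (-(ω j) * ψ₁ j t) t)
    (hs : ∀ j t, HasDerivAt (s j) (ω j * τ j t) t)
    (hτ : ∀ j t, HasDerivAt (τ j) (-(ω j) * s j t + c j * u t) t)
    (hu : ∀ t, |u t| ≤ 1)
    (hH₃ : ∀ t, Summable (fun j => c j * ω j * (ω j * ψ₂ j t + s j t)))
    (hH₄ : ∀ t, Summable (fun j => c j * ω j ^ 2 * (-(ω j) * ψ₁ j t + τ j t)))
    (hdom₃ : ∀ K : ℝ, 0 < K → ∃ g : ℕ → ℝ, Summable g ∧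
      ∀ j, ∀ t : ℝ, |t| ≤ K →
        |c j| * ω j ^ 2 * (ω j * |ψ₁ j t| + |τ j t|) ≤ g j)
    (hdom₄ : ∀ K : ℝ, 0 < K → ∃ g : ℕ → ℝ, Summable g ∧
      ∀ j, ∀ t : ℝ, |t| ≤ K →
        |c j| * ω j ^ 3 * (ω j * |ψ₂ j t| + 2 * |s j t|) + c j ^ 2 * ω j ^ 2 ≤ g j) :
    (∀ t : ℝ, HasDerivAt (fun r => -∑' j : ℕ, c j * ω j * (ω j * ψ₂ j r + s j r))
        (-∑' j : ℕ, c j * ω j ^ 2 * (-(ω j) * ψ₁ j t + τ j t)) t) ∧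
    (∀ t : ℝ, HasDerivAt
        (fun r => -∑' j : ℕ, c j * ω j ^ 2 * (-(ω j) * ψ₁ j r + τ j r))
        ((∑' j : ℕ, c j * ω j ^ 3 * (ω j * ψ₂ j t + 2 * s j t))
          - u t * ∑' j : ℕ, c j ^ 2 * ω j ^ 2) t) := by
  have hω₀ : ∀ j, 0 ≤ ω j := fun j => (hω j).le
  have hdom₄' : IsLocallySummablyBounded fun j t =>
      |c j| * ω j ^ 3 * (ω j * |ψ₂ j t| + 2 * |s j t|) + c j ^ 2 * ω j ^ 2 := hdom₄
  have hdrift : IsLocallySummablyBounded fun j t =>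
      ‖c j * ω j ^ 3 * (ω j * ψ₂ j t + 2 * s j t)‖ :=
    hdom₄'.mono fun j t => (norm_H₄_deriv_drift_le _ _ _ _ (hω₀ j)).trans
      (le_add_of_nonneg_right (by positivity))
  have hcontrol : IsLocallySummablyBounded fun j (_ : ℝ) => c j ^ 2 * ω j ^ 2 :=
    hdom₄'.mono fun j t => le_add_of_nonneg_left
      ((norm_nonneg _).trans (norm_H₄_deriv_drift_le _ _ _ _ (hω₀ j)))
  refine ⟨fun t => ?_, fun t => ?_⟩
  · exact (hasDerivAt_tsum_of_isLocallySummablyBounded (hasDerivAt_H₃_term hψ₂ hs)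
      (IsLocallySummablyBounded.mono hdom₃ fun j t => norm_H₃_deriv_term_le _ _ _ _ (hω₀ j))
      (hH₃ t)).neg
  · have h := (hasDerivAt_tsum_of_isLocallySummablyBounded (hasDerivAt_H₄_term hψ₁ hτ)
      (hdom₄'.mono fun j t => norm_H₄_deriv_term_le _ _ _ _ _ (hω₀ j) (hu t)) (hH₄ t)).neg
    rwa [tsum_neg_add_mul_right (hdrift.summable_of_norm t)
      (hcontrol.summable (fun _ _ => by positivity) t), neg_neg] at h
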